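/- Every coordination game on a directed graph in which every strongly connected component is a simple cycle is coalitionally weakly acyclic, and hence possesses a strong equilibrium. -/
import Mathlib


open Finset

/-- Payoff in a coordination game on a directed graph (unit weights, zero
bonuses): the number of in-neighbours of `i` that chose the same colour. -/
def payoff {n : ℕ} {C : Type} [DecidableEq C]
    (E : Fin n → Fin n → Prop) [DecidableRel E]
    (s : Fin n → C) (i : Fin n) : ℕ :=
  (univ.filter (fun j => E j i ∧ s j = s i)).card

/-- A colouring is valid if every node chooses a colour available to it. -/
def Valid {n : ℕ} {C : Type} (A : Fin n → Finset C) (s : Fin n → C) : Prop :=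
  ∀ i, s i ∈ A i

/-- `s'` is a profitable deviation (of the non-empty coalition on which `s`
and `s'` differ) from `s`: every deviating player strictly improves. -/
def ProfDev {n : ℕ} {C : Type} (p : (Fin n → C) → Fin n → ℕ)
    (s s' : Fin n → C) : Prop :=
  s ≠ s' ∧ ∀ i, s i ≠ s' i → p s i < p s' i

/-- A strong equilibrium: no coalition has a profitable deviation. -/
def StrongEq {n : ℕ} {C : Type} (A : Fin n → Finset C)
    (p : (Fin n → C) → Fin n → ℕ) (s : Fin n → C) : Prop :=
  ∀ s', Valid A s' → ¬ ProfDev p s s'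

/-- A Nash equilibrium: no single player can strictly improve unilaterally. -/
def NashEq {n : ℕ} {C : Type} [DecidableEq C] (A : Fin n → Finset C)
    (p : (Fin n → C) → Fin n → ℕ) (s : Fin n → C) : Prop :=
  ∀ i, ∀ c ∈ A i, p (Function.update s i c) i ≤ p s i

/-- `i` and `j` lie in the same strongly connected component of the directed
graph with edge relation `E`. -/
def SameSCC {n : ℕ} (E : Fin n → Fin n → Prop) (i j : Fin n) : Prop :=
  Relation.ReflTransGen E i j ∧ Relation.ReflTransGen E j i

set_option linter.unusedSectionVars false

section CGAux

open scoped Classical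

variable {n : ℕ} {C : Type} [DecidableEq C]
variable (E : Fin n → Fin n → Prop) [DecidableRel E] (A : Fin n → Finset C)

lemma sccRefl (i : Fin n) : SameSCC E i i := ⟨.refl, .refl⟩

lemma sccSymm {i j : Fin n} (h : SameSCC E i j) : SameSCC E j i := ⟨h.2, h.1⟩

lemma sccTrans {i j k : Fin n} (h : SameSCC E i j) (h' : SameSCC E j k) :
    SameSCC E i k := ⟨h.1.trans h'.1, h'.2.trans h.2⟩

/-- level of a node -/
noncomputable def lv (i : Fin n) : ℕ :=
  (univ.filter (fun j => Relation.ReflTransGen E j i)).card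

lemma lv_le_of_rtg {i j : Fin n} (h : Relation.ReflTransGen E j i) :
    lv E j ≤ lv E i := by
  apply Finset.card_le_card
  intro m hm
  simp only [lv, Finset.mem_filter, Finset.mem_univ, true_and] at *
  exact hm.trans h

lemma same_of_rtg_lv_le {i j : Fin n} (h : Relation.ReflTransGen E j i)
    (h2 : lv E i ≤ lv E j) : SameSCC E i j := by
  have hsub : (univ.filter (fun m => Relation.ReflTransGen E m j)) ⊆
      (univ.filter (fun m => Relation.ReflTransGen E m i)) := by
    intro m hm
    simp only [Finset.mem_filter, Finset.mem_univ, true_and] at *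
    exact hm.trans h
  have heq := Finset.eq_of_subset_of_card_le hsub h2
  have hij : Relation.ReflTransGen E i j := by
    have : i ∈ (univ.filter (fun m => Relation.ReflTransGen E m j)) := by
      rw [heq]
      exact Finset.mem_filter.mpr ⟨Finset.mem_univ i, Relation.ReflTransGen.refl⟩
    simpa using this
  exact ⟨hij, h⟩

lemma lv_congr {i j : Fin n} (h : SameSCC E i j) : lv E i = lv E j :=
  le_antisymm (lv_le_of_rtg E h.1) (lv_le_of_rtg E h.2)

lemma lv_lt_of_edge {i j : Fin n} (h : E j i) (hns : ¬ SameSCC E j i) :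
    lv E j < lv E i := by
  apply Finset.card_lt_card
  constructor
  · intro m hm
    simp only [Finset.mem_filter, Finset.mem_univ, true_and] at *
    exact hm.trans (Relation.ReflTransGen.single h)
  · intro hsub
    have : i ∈ (univ.filter (fun m => Relation.ReflTransGen E m j)) := by
      apply hsub
      exact Finset.mem_filter.mpr ⟨Finset.mem_univ i, Relation.ReflTransGen.refl⟩
    simp only [Finset.mem_filter, Finset.mem_univ, true_and] at this
    exact hns ⟨Relation.ReflTransGen.single h, this⟩

lemma lv_le_n (i : Fin n) : lv E i ≤ n := by
  have := Finset.card_filter_le (univ : Finset (Fin n))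
    (fun j => Relation.ReflTransGen E j i)
  simpa [lv] using this

lemma lv_in_le {m v : Fin n} (h : E m v) : lv E m ≤ lv E v :=
  lv_le_of_rtg E (Relation.ReflTransGen.single h)

lemma lv_in_lt {m v : Fin n} (h : E m v) (hns : ¬ SameSCC E v m) :
    lv E m < lv E v :=
  lv_lt_of_edge E h (fun hs => hns (sccSymm E hs))

noncomputable def levset (ℓ : ℕ) : Finset (Fin n) :=
  univ.filter (fun v => lv E v = ℓ)

lemma mem_levset {v : Fin n} {ℓ : ℕ} : v ∈ levset E ℓ ↔ lv E v = ℓ := by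
  simp [levset]

lemma card_levset_le (ℓ : ℕ) : (levset E ℓ).card ≤ n := by
  have := Finset.card_filter_le (univ : Finset (Fin n)) (fun v => lv E v = ℓ)
  simpa [levset] using this

/-! ### payoff decomposition -/

noncomputable def eC (s : Fin n → C) (v : Fin n) (c : C) : ℕ :=
  (univ.filter (fun m => E m v ∧ ¬ SameSCC E v m ∧ s m = c)).card

noncomputable def xC (s : Fin n → C) (v : Fin n) : ℕ := eC E s v (s v)

noncomputable def bC (s : Fin n → C) (v : Fin n) : ℕ :=
  (univ.filter (fun m => E m v ∧ SameSCC E v m ∧ s m = s v)).card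

lemma payoff_split (s : Fin n → C) (v : Fin n) :
    payoff E s v = bC E s v + xC E s v := by
  have h := Finset.card_filter_add_card_filter_not
    (s := (univ.filter (fun j => E j v ∧ s j = s v))) (p := fun m => SameSCC E v m)
  rw [Finset.filter_filter, Finset.filter_filter] at h
  have e1 : (univ.filter fun a => (E a v ∧ s a = s v) ∧ SameSCC E v a)
      = (univ.filter fun m => E m v ∧ SameSCC E v m ∧ s m = s v) :=
    Finset.filter_congr (fun m _ => by tauto)
  have e2 : (univ.filter fun a => (E a v ∧ s a = s v) ∧ ¬ SameSCC E v a)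
      = (univ.filter fun m => E m v ∧ ¬ SameSCC E v m ∧ s m = s v) :=
    Finset.filter_congr (fun m _ => by tauto)
  rw [e1, e2] at h
  rw [payoff, bC, xC, eC, ← h]

lemma payoff_le_n (s : Fin n → C) (v : Fin n) : payoff E s v ≤ n := by
  have := Finset.card_filter_le (univ : Finset (Fin n)) (fun j => E j v ∧ s j = s v)
  simpa [payoff] using this

lemma xC_le_payoff (s : Fin n → C) (v : Fin n) : xC E s v ≤ payoff E s v := by
  rw [payoff_split E s v]; omega

lemma xC_le_n (s : Fin n → C) (v : Fin n) : xC E s v ≤ n :=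
  le_trans (xC_le_payoff E s v) (payoff_le_n E s v)

lemma eC_congr {s s' : Fin n → C} {v : Fin n}
    (h : ∀ m, E m v → ¬ SameSCC E v m → s' m = s m) (c : C) :
    eC E s' v c = eC E s v c := by
  unfold eC
  congr 1
  apply Finset.filter_congr
  intro m _
  constructor
  · rintro ⟨h1, h2, h3⟩; exact ⟨h1, h2, by rw [← h m h1 h2]; exact h3⟩
  · rintro ⟨h1, h2, h3⟩; exact ⟨h1, h2, by rw [h m h1 h2]; exact h3⟩

lemma payoff_congr {s s' : Fin n → C} {v : Fin n}
    (hv : s' v = s v) (h : ∀ m, E m v → s' m = s m) :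
    payoff E s' v = payoff E s v := by
  unfold payoff
  congr 1
  apply Finset.filter_congr
  intro m _
  constructor
  · rintro ⟨h1, h2⟩; exact ⟨h1, by rw [← h m h1, ← hv]; exact h2⟩
  · rintro ⟨h1, h2⟩; exact ⟨h1, by rw [h m h1, hv]; exact h2⟩

lemma xC_congr {s s' : Fin n → C} {v : Fin n}
    (hv : s' v = s v) (h : ∀ m, E m v → ¬ SameSCC E v m → s' m = s m) :
    xC E s' v = xC E s v := by
  unfold xC
  rw [hv, eC_congr E h]

/-- hard-dead boundary predicate -/
def hdP (s : Fin n → C) (v : Fin n) : Prop :=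
  ∃ q, (E q v ∧ SameSCC E v q) ∧ s q ≠ s v ∧
    (s q ∉ A v ∨ eC E s v (s q) < eC E s v (s v))

lemma hdP_congr {s s' : Fin n → C} {v : Fin n}
    (hv : s' v = s v) (h : ∀ m, E m v → s' m = s m) :
    hdP E A s' v ↔ hdP E A s v := by
  unfold hdP
  have he : ∀ c, eC E s' v c = eC E s v c :=
    eC_congr E (fun m hm _ => h m hm)
  constructor
  · rintro ⟨q, ⟨h1, h2⟩, h3, h4⟩
    refine ⟨q, ⟨h1, h2⟩, ?_, ?_⟩
    · rw [← h q h1, ← hv]; exact h3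
    · rw [← h q h1, ← hv]; rw [he, he] at h4; exact h4
  · rintro ⟨q, ⟨h1, h2⟩, h3, h4⟩
    refine ⟨q, ⟨h1, h2⟩, ?_, ?_⟩
    · rw [h q h1, hv]; exact h3
    · rw [h q h1, hv, he, he]; exact h4

lemma node_congr {s s' : Fin n → C} {v : Fin n}
    (hv : s' v = s v) (h : ∀ m, E m v → s' m = s m) :
    payoff E s' v = payoff E s v ∧ xC E s' v = xC E s v ∧
      (hdP E A s' v ↔ hdP E A s v) :=
  ⟨payoff_congr E hv h, xC_congr E hv (fun m hm _ => h m hm), hdP_congr E A hv h⟩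

end CGAux
section CGAux2

open Finset
open scoped Classical

variable {n : ℕ} {C : Type} [DecidableEq C]
variable (E : Fin n → Fin n → Prop) [DecidableRel E] (A : Fin n → Finset C)

/-- radix -/
def Bb (n : ℕ) : ℕ := n * n + 1

def Dd (n : ℕ) : ℕ := (Bb n) ^ 3

noncomputable def TQ (s : Fin n → C) (ℓ : ℕ) : ℕ := ∑ v ∈ levset E ℓ, payoff E s v

noncomputable def EQ (s : Fin n → C) (ℓ : ℕ) : ℕ := ∑ v ∈ levset E ℓ, xC E s v

noncomputable def RQ (s : Fin n → C) (ℓ : ℕ) : ℕ :=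
  ∑ v ∈ levset E ℓ, (if hdP E A s v then 1 else 0)

noncomputable def dgt (s : Fin n → C) (ℓ : ℕ) : ℕ :=
  (Bb n) ^ 2 * EQ E s ℓ + (Bb n) * TQ E s ℓ + RQ E A s ℓ

noncomputable def muM (s : Fin n → C) : ℕ :=
  ∑ j ∈ Finset.range (n + 1), dgt E A s (n - j) * (Dd n) ^ j

lemma sum_bounded {S : Finset (Fin n)} {g : Fin n → ℕ} (hS : S.card ≤ n)
    (hg : ∀ v, g v ≤ n) : (∑ v ∈ S, g v) ≤ n * n := by
  calc (∑ v ∈ S, g v) ≤ ∑ _v ∈ S, n := Finset.sum_le_sum (fun v _ => hg v)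
    _ = S.card * n := by rw [Finset.sum_const, smul_eq_mul]
    _ ≤ n * n := Nat.mul_le_mul_right n hS

lemma TQ_lt (s : Fin n → C) (ℓ : ℕ) : TQ E s ℓ < Bb n := by
  have := sum_bounded (card_levset_le E ℓ) (payoff_le_n E s)
  unfold TQ Bb
  omega

lemma EQ_lt (s : Fin n → C) (ℓ : ℕ) : EQ E s ℓ < Bb n := by
  have := sum_bounded (card_levset_le E ℓ) (xC_le_n E s)
  unfold EQ Bb
  omega

lemma RQ_lt (s : Fin n → C) (ℓ : ℕ) : RQ E A s ℓ < Bb n := by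
  have h1 : RQ E A s ℓ ≤ (levset E ℓ).card := by
    unfold RQ
    calc (∑ v ∈ levset E ℓ, if hdP E A s v then 1 else 0)
        ≤ ∑ _v ∈ levset E ℓ, 1 := Finset.sum_le_sum (fun v _ => by split <;> omega)
      _ = (levset E ℓ).card := by simp
  have h2 := card_levset_le E ℓ
  have h3 : n ≤ n * n := by nlinarith
  unfold Bb
  omega

lemma dgt_lt (s : Fin n → C) (ℓ : ℕ) : dgt E A s ℓ < Dd n := by
  have h1 := TQ_lt E s ℓ
  have h2 := EQ_lt E s ℓ
  have h3 := RQ_lt E A s ℓ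
  unfold dgt Dd
  have hB : 1 ≤ Bb n := by unfold Bb; omega
  nlinarith [pow_pos (show 0 < Bb n by omega) 2]

lemma dgt_lt_of_EQ {s s' : Fin n → C} {ℓ : ℕ} (hE : EQ E s ℓ < EQ E s' ℓ) :
    dgt E A s ℓ < dgt E A s' ℓ := by
  have h1 := TQ_lt E s ℓ
  have h3 := RQ_lt E A s ℓ
  unfold dgt
  have hB : 1 ≤ Bb n := by unfold Bb; omega
  nlinarith [pow_pos (show 0 < Bb n by omega) 2, sq_nonneg (Bb n)]

lemma dgt_lt_of_TQ {s s' : Fin n → C} {ℓ : ℕ} (hE : EQ E s ℓ ≤ EQ E s' ℓ)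
    (hT : TQ E s ℓ < TQ E s' ℓ) : dgt E A s ℓ < dgt E A s' ℓ := by
  have h3 := RQ_lt E A s ℓ
  unfold dgt
  nlinarith [pow_pos (show 0 < Bb n by unfold Bb; omega) 2]

lemma dgt_lt_of_RQ {s s' : Fin n → C} {ℓ : ℕ} (hE : EQ E s ℓ ≤ EQ E s' ℓ)
    (hT : TQ E s ℓ ≤ TQ E s' ℓ) (hR : RQ E A s ℓ < RQ E A s' ℓ) :
    dgt E A s ℓ < dgt E A s' ℓ := by
  unfold dgt
  nlinarith [pow_pos (show 0 < Bb n by unfold Bb; omega) 2]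

lemma geo_sum (D m : ℕ) (hD : 1 ≤ D) :
    (∑ j ∈ Finset.range m, (D - 1) * D ^ j) + 1 = D ^ m := by
  induction m with
  | zero => simp
  | succ m ih =>
    rw [Finset.sum_range_succ, pow_succ]
    have h1 : 1 + (D - 1) = D := by omega
    have : (D - 1) * D ^ m + D ^ m = D ^ m * D := by
      calc (D - 1) * D ^ m + D ^ m = ((D - 1) + 1) * D ^ m := by ring
        _ = D ^ m * D := by rw [show (D - 1) + 1 = D by omega]; ring
    omega

lemma muM_lt_bound (s : Fin n → C) : muM E A s < (Dd n) ^ (n + 1) := by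
  have hD : 1 ≤ Dd n := by
    unfold Dd
    exact Nat.one_le_pow _ _ (by unfold Bb; omega)
  have h1 : muM E A s ≤ ∑ j ∈ Finset.range (n + 1), (Dd n - 1) * (Dd n) ^ j := by
    apply Finset.sum_le_sum
    intro j _
    have := dgt_lt E A s (n - j)
    exact Nat.mul_le_mul_right _ (by omega)
  have h2 := geo_sum (Dd n) (n + 1) hD
  omega

/-- lexicographic increase gives measure increase -/
lemma mu_lt_of_dgt {s s' : Fin n → C} {L : ℕ} (hL : L ≤ n)
    (hlow : ∀ ℓ, ℓ < L → dgt E A s' ℓ = dgt E A s ℓ)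
    (hup : dgt E A s L < dgt E A s' L) : muM E A s < muM E A s' := by
  have hD : 1 ≤ Dd n := Nat.one_le_pow _ _ (by unfold Bb; omega)
  set J := n - L with hJ
  have hnJ : n - J = L := by omega
  have hsplit : ∀ u : Fin n → C, muM E A u =
      (∑ j ∈ Finset.range J, dgt E A u (n - j) * (Dd n) ^ j)
      + dgt E A u L * (Dd n) ^ J
      + ∑ j ∈ Finset.Ico (J + 1) (n + 1), dgt E A u (n - j) * (Dd n) ^ j := by
    intro u
    rw [muM, Finset.range_eq_Ico,
      ← Finset.sum_Ico_consecutive _ (Nat.zero_le (J + 1)) (by omega : J + 1 ≤ n + 1),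
      ← Finset.range_eq_Ico, Finset.sum_range_succ, hnJ]
  have hhigh : ∑ j ∈ Finset.Ico (J + 1) (n + 1), dgt E A s' (n - j) * (Dd n) ^ j
      = ∑ j ∈ Finset.Ico (J + 1) (n + 1), dgt E A s (n - j) * (Dd n) ^ j := by
    apply Finset.sum_congr rfl
    intro j hj
    rw [Finset.mem_Ico] at hj
    have : n - j < L := by omega
    rw [hlow _ this]
  have hlowbd : (∑ j ∈ Finset.range J, dgt E A s (n - j) * (Dd n) ^ j)
      ≤ (Dd n) ^ J - 1 := by
    have h1 : (∑ j ∈ Finset.range J, dgt E A s (n - j) * (Dd n) ^ j)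
        ≤ ∑ j ∈ Finset.range J, (Dd n - 1) * (Dd n) ^ j := by
      apply Finset.sum_le_sum
      intro j _
      exact Nat.mul_le_mul_right _ (by have := dgt_lt E A s (n - j); omega)
    have h2 := geo_sum (Dd n) J hD
    omega
  have hDJ : 1 ≤ (Dd n) ^ J := Nat.one_le_pow _ _ (by omega)
  rw [hsplit s, hsplit s', hhigh]
  have hup' : dgt E A s L * (Dd n) ^ J + (Dd n) ^ J ≤ dgt E A s' L * (Dd n) ^ J := by
    have : (dgt E A s L + 1) * (Dd n) ^ J ≤ dgt E A s' L * (Dd n) ^ J :=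
      Nat.mul_le_mul_right _ (by omega)
    nlinarith
  omega

/-- sums differing at one point -/
lemma sum_exc1 {S : Finset (Fin n)} {g g' : Fin n → ℕ} {i : Fin n} (hi : i ∈ S)
    (h : ∀ v ∈ S, v ≠ i → g' v = g v) :
    (∑ v ∈ S, g' v) + g i = (∑ v ∈ S, g v) + g' i := by
  have e1 := Finset.add_sum_erase S g' hi
  have e2 := Finset.add_sum_erase S g hi
  have e3 : ∑ v ∈ S.erase i, g' v = ∑ v ∈ S.erase i, g v :=
    Finset.sum_congr rfl
      (fun v hv => h v (Finset.mem_of_mem_erase hv) (Finset.ne_of_mem_erase hv))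
  omega

lemma sum_exc2 {S : Finset (Fin n)} {g g' : Fin n → ℕ} {i j : Fin n} (hi : i ∈ S)
    (hj : j ∈ S) (hij : i ≠ j) (h : ∀ v ∈ S, v ≠ i → v ≠ j → g' v = g v) :
    (∑ v ∈ S, g' v) + g i + g j = (∑ v ∈ S, g v) + g' i + g' j := by
  have hje : i ∈ S.erase j := Finset.mem_erase.mpr ⟨hij, hi⟩
  have e1 := Finset.add_sum_erase S g' hj
  have e2 := Finset.add_sum_erase S g hj
  have e3 := sum_exc1 (S := S.erase j) (g := g) (g' := g') hje
    (fun v hv hvi => h v (Finset.mem_of_mem_erase hv) hvi (Finset.ne_of_mem_erase hv))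
  omega

lemma sum_exc3 {S : Finset (Fin n)} {g g' : Fin n → ℕ} {i j k : Fin n} (hi : i ∈ S)
    (hj : j ∈ S) (hk : k ∈ S) (hij : i ≠ j) (hik : i ≠ k) (hjk : j ≠ k)
    (h : ∀ v ∈ S, v ≠ i → v ≠ j → v ≠ k → g' v = g v) :
    (∑ v ∈ S, g' v) + g i + g j + g k = (∑ v ∈ S, g v) + g' i + g' j + g' k := by
  have hie : i ∈ S.erase k := Finset.mem_erase.mpr ⟨hik, hi⟩
  have hje : j ∈ S.erase k := Finset.mem_erase.mpr ⟨hjk, hj⟩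
  have e1 := Finset.add_sum_erase S g' hk
  have e2 := Finset.add_sum_erase S g hk
  have e3 := sum_exc2 (S := S.erase k) (g := g) (g' := g') hie hje hij
    (fun v hv hvi hvj => h v (Finset.mem_of_mem_erase hv) hvi hvj (Finset.ne_of_mem_erase hv))
  omega

end CGAux2
section CGAux3

open Finset
open scoped Classical

variable {n : ℕ} {C : Type} [DecidableEq C]
variable (E : Fin n → Fin n → Prop) [DecidableRel E] (A : Fin n → Finset C)

lemma bC_le_one
    (hin : ∀ i j k, SameSCC E i j → SameSCC E i k → E j i → E k i → j = k)
    (s : Fin n → C) (v : Fin n) : bC E s v ≤ 1 := by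
  rw [bC, Finset.card_le_one]
  intro a ha b hb
  simp only [Finset.mem_filter, Finset.mem_univ, true_and] at ha hb
  exact hin v a b ha.2.1 hb.2.1 ha.1 hb.1

lemma bC_eq
    (hin : ∀ i j k, SameSCC E i j → SameSCC E i k → E j i → E k i → j = k)
    {s : Fin n → C} {v q : Fin n} (hq : E q v) (hsq : SameSCC E v q) :
    bC E s v = if s q = s v then 1 else 0 := by
  rw [bC]
  split
  · next h =>
    rw [show (univ.filter (fun m => E m v ∧ SameSCC E v m ∧ s m = s v)) = {q} from ?_]
    · exact Finset.card_singleton q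
    · ext m
      simp only [Finset.mem_filter, Finset.mem_univ, true_and, Finset.mem_singleton]
      constructor
      · rintro ⟨h1, h2, h3⟩; exact hin v m q h2 hsq h1 hq
      · rintro rfl; exact ⟨hq, hsq, h⟩
  · next h =>
    rw [Finset.card_eq_zero]
    ext m
    simp only [Finset.mem_filter, Finset.mem_univ, true_and, Finset.notMem_empty,
      iff_false]
    rintro ⟨h1, h2, h3⟩
    exact h (by rw [← hin v m q h2 hsq h1 hq]; exact h3)

/-- successor within the SCC (junk value if none) -/
noncomputable def fS (v : Fin n) : Fin n :=
  if h : ∃ w, E v w ∧ SameSCC E v w then h.choose else v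

lemma fS_spec {v : Fin n} (h : ∃ w, E v w ∧ SameSCC E v w) :
    E v (fS E v) ∧ SameSCC E v (fS E v) := by
  rw [fS, dif_pos h]
  exact h.choose_spec

lemma fS_eq
    (hout : ∀ i j k, SameSCC E i j → SameSCC E i k → E i j → E i k → j = k)
    {v w : Fin n} (h1 : E v w) (h2 : SameSCC E v w) : fS E v = w := by
  have hs := fS_spec E ⟨w, h1, h2⟩
  exact hout v _ w hs.2 h2 hs.1 h1

lemma succ_exists {a b : Fin n} (hs : SameSCC E a b) (hne : a ≠ b) :
    ∃ w, E a w ∧ SameSCC E a w := by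
  rcases (Relation.ReflTransGen.cases_head hs.1) with heq | ⟨w, hw, hwb⟩
  · exact absurd heq hne
  · exact ⟨w, hw, Relation.ReflTransGen.single hw, hwb.trans hs.2⟩

lemma orb
    (hout : ∀ i j k, SameSCC E i j → SameSCC E i k → E i j → E i k → j = k)
    {u : Fin n} : ∀ {v : Fin n}, Relation.ReflTransGen E u v →
      Relation.ReflTransGen E v u → ∃ t, (fS E)^[t] u = v := by
  intro v h1
  induction h1 with
  | refl => exact fun _ => ⟨0, rfl⟩
  | @tail b c hub hbc ih =>
    intro h2
    have hcb : Relation.ReflTransGen E c u := h2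
    have hbu : Relation.ReflTransGen E b u :=
      (Relation.ReflTransGen.single hbc).trans hcb
    obtain ⟨t, ht⟩ := ih hbu
    have hfb : fS E b = c :=
      fS_eq E hout hbc ⟨Relation.ReflTransGen.single hbc, hcb.trans hub⟩
    exact ⟨t + 1, by rw [Function.iterate_succ_apply', ht, hfb]⟩

lemma iter_class
    (hout : ∀ i j k, SameSCC E i j → SameSCC E i k → E i j → E i k → j = k)
    {i₀ v₀ : Fin n} (h : SameSCC E i₀ v₀) (hne : i₀ ≠ v₀) :
    ∀ t, SameSCC E i₀ ((fS E)^[t] v₀) := by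
  intro t
  induction t with
  | zero => exact h
  | succ t ih =>
    rw [Function.iterate_succ_apply']
    set w := (fS E)^[t] v₀ with hw
    have hex : ∃ z, E w z ∧ SameSCC E w z := by
      by_cases hwi : w = i₀
      · exact succ_exists E (by rw [hwi]; exact h) (by rw [hwi]; exact hne)
      · exact succ_exists E (sccSymm E ih) (fun hh => hwi hh)
    have hs := fS_spec E hex
    exact sccTrans E ih hs.2

end CGAux3
section CGAux4

open Finset
open scoped Classical

variable {n : ℕ} {C : Type} [DecidableEq C]
variable (E : Fin n → Fin n → Prop) [DecidableRel E] (A : Fin n → Finset C)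

lemma upd_valid {s : Fin n → C} {i : Fin n} {c : C} (hval : Valid A s)
    (hc : c ∈ A i) : Valid A (Function.update s i c) := by
  intro v
  rcases eq_or_ne v i with rfl | hvi
  · rw [Function.update_self]; exact hc
  · rw [Function.update_of_ne hvi]; exact hval v

lemma upd_profdev {s : Fin n → C} {i : Fin n} {c : C} (hne : c ≠ s i)
    (himp : payoff E s i < payoff E (Function.update s i c) i) :
    ProfDev (payoff E) s (Function.update s i c) := by
  constructor
  · intro h
    apply hne
    have := congrFun h i
    rw [Function.update_self] at this
    exact this.symm
  · intro v hv
    rcases eq_or_ne v i with rfl | hvi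
    · exact himp
    · rw [Function.update_of_ne hvi] at hv
      exact absurd rfl hv

/-- Reduction: any profitable deviation yields a single-player improvement or
a whole-SCC profitable deviation. -/
lemma red
    (hloop : ∀ i, ¬ E i i)
    (hin : ∀ i j k, SameSCC E i j → SameSCC E i k → E j i → E k i → j = k)
    (hout : ∀ i j k, SameSCC E i j → SameSCC E i k → E i j → E i k → j = k)
    {s s₁ : Fin n → C} (hval : Valid A s) (hval₁ : Valid A s₁)
    (hdev : ProfDev (payoff E) s s₁) :
    (∃ i c, c ∈ A i ∧ c ≠ s i ∧
      payoff E s i < payoff E (Function.update s i c) i) ∨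
    (∃ i₀ s₂, Valid A s₂ ∧ ProfDev (payoff E) s s₂ ∧
      (∀ v, s₂ v ≠ s v ↔ SameSCC E i₀ v)) := by
  have hKne : ∃ m, s m ≠ s₁ m := Function.ne_iff.mp hdev.1
  have hKne' : (univ.filter (fun m => s m ≠ s₁ m)).Nonempty := by
    obtain ⟨m, hm⟩ := hKne
    exact ⟨m, Finset.mem_filter.mpr ⟨Finset.mem_univ m, hm⟩⟩
  obtain ⟨i₀, hi₀K, hmin⟩ :=
    Finset.exists_min_image (univ.filter (fun m => s m ≠ s₁ m)) (lv E) hKne'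
  have hi₀ : s i₀ ≠ s₁ i₀ := (Finset.mem_filter.mp hi₀K).2
  have keyf : ∀ j, s j ≠ s₁ j → Relation.ReflTransGen E j i₀ → SameSCC E i₀ j := by
    intro j hj hrtg
    exact same_of_rtg_lv_le E hrtg
      (hmin j (Finset.mem_filter.mpr ⟨Finset.mem_univ j, hj⟩))
  set s₂ : Fin n → C := fun m => if SameSCC E i₀ m then s₁ m else s m with hs₂def
  have hs2p : ∀ v, SameSCC E i₀ v → s₂ v = s₁ v := by
    intro v hv; simp only [hs₂def]; exact if_pos hv
  have hs2n : ∀ v, ¬ SameSCC E i₀ v → s₂ v = s v := by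
    intro v hv; simp only [hs₂def]; exact if_neg hv
  have hdiff : ∀ v, s₂ v ≠ s v ↔ (SameSCC E i₀ v ∧ s₁ v ≠ s v) := by
    intro v
    by_cases hv : SameSCC E i₀ v
    · rw [hs2p v hv]; simp [hv]
    · rw [hs2n v hv]; simp [hv]
  have hpay : ∀ v, SameSCC E i₀ v → payoff E s₂ v = payoff E s₁ v := by
    intro v hv
    apply payoff_congr E (hs2p v hv)
    intro m hm
    by_cases hsm : SameSCC E i₀ m
    · exact hs2p m hsm
    · rw [hs2n m hsm]
      by_contra hne
      exact hsm (keyf m hne ((Relation.ReflTransGen.single hm).trans hv.2))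
  have hdev₂ : ProfDev (payoff E) s s₂ := by
    constructor
    · intro h
      apply hi₀
      have h1 := congrFun h i₀
      rw [hs2p i₀ (sccRefl E i₀)] at h1
      exact h1
    · intro v hv
      have hv' : s₂ v ≠ s v := fun h => hv h.symm
      obtain ⟨hsv, hne⟩ := (hdiff v).mp hv'
      rw [hpay v hsv]
      exact hdev.2 v (fun h => hne h.symm)
  have hval₂ : Valid A s₂ := by
    intro v
    by_cases hv : SameSCC E i₀ v
    · rw [hs2p v hv]; exact hval₁ v
    · rw [hs2n v hv]; exact hval v
  by_cases hall : ∀ v, SameSCC E i₀ v → s₁ v ≠ s v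
  · right
    refine ⟨i₀, s₂, hval₂, hdev₂, fun v => ?_⟩
    rw [hdiff v]
    exact ⟨fun h => h.1, fun h => ⟨h, hall v h⟩⟩
  · left
    push_neg at hall
    obtain ⟨v₀, hv₀s, hv₀e⟩ := hall
    have hnev₀ : i₀ ≠ v₀ := by
      intro h
      rw [h] at hi₀
      exact hi₀ hv₀e.symm
    obtain ⟨t₀, ht₀⟩ := orb E hout hv₀s.2 hv₀s.1
    have hPex : ∃ t, s₂ ((fS E)^[t] v₀) ≠ s ((fS E)^[t] v₀) := by
      refine ⟨t₀, ?_⟩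
      rw [ht₀, hs2p i₀ (sccRefl E i₀)]
      exact fun h => hi₀ h.symm
    set T := Nat.find hPex with hTdef
    have hPT : s₂ ((fS E)^[T] v₀) ≠ s ((fS E)^[T] v₀) := Nat.find_spec hPex
    have hT0 : ¬ (s₂ ((fS E)^[0] v₀) ≠ s ((fS E)^[0] v₀)) := by
      simp only [Function.iterate_zero, id_eq]
      rw [hs2p v₀ hv₀s, hv₀e]
      simp
    have hT1 : 1 ≤ T := by
      rcases Nat.eq_zero_or_pos T with h | h
      · exact absurd (h ▸ hPT) hT0
      · exact h
    set jj := (fS E)^[T] v₀ with hjjdef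
    set u := (fS E)^[T - 1] v₀ with hudef
    have hjcl : SameSCC E i₀ jj := iter_class E hout hv₀s hnev₀ T
    have hucl : SameSCC E i₀ u := iter_class E hout hv₀s hnev₀ (T - 1)
    have hex : ∃ z, E u z ∧ SameSCC E u z := by
      by_cases hwi : u = i₀
      · exact succ_exists E (by rw [hwi]; exact hv₀s) (by rw [hwi]; exact hnev₀)
      · exact succ_exists E (sccSymm E hucl) (fun hh => hwi hh)
    have hfu := fS_spec E hex
    have hJ : jj = fS E u := by
      have h := Function.iterate_succ_apply' (fS E) (T - 1) v₀
      rw [show Nat.succ (T - 1) = T by omega] at h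
      exact h
    have hedge : E u jj := by rw [hJ]; exact hfu.1
    have hsame_ujj : SameSCC E u jj := by rw [hJ]; exact hfu.2
    have hu_nd : s₂ u = s u := by
      have := Nat.find_min hPex (show T - 1 < T by omega)
      simpa [hudef] using not_not.mp this
    have hjd : s₂ jj ≠ s jj := hPT
    have hj₁ : s₂ jj = s₁ jj := hs2p jj hjcl
    have hcne : s₁ jj ≠ s jj := by rw [← hj₁]; exact hjd
    have hupd : payoff E (Function.update s jj (s₁ jj)) jj = payoff E s₂ jj := by
      apply payoff_congr E
      · rw [Function.update_self, hj₁]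
      · intro m hm
        have hmj : m ≠ jj := fun h => hloop jj (h ▸ hm)
        rw [Function.update_of_ne hmj]
        by_cases hsm : SameSCC E i₀ m
        · have hmu : m = u :=
            hin jj m u (sccTrans E (sccSymm E hjcl) hsm) (sccSymm E hsame_ujj)
              hm hedge
          rw [hmu, hu_nd]
        · rw [hs2n m hsm]
    have himp : payoff E s jj < payoff E (Function.update s jj (s₁ jj)) jj := by
      rw [hupd]
      exact hdev₂.2 jj (fun h => hjd h.symm)
    exact ⟨jj, s₁ jj, hval₁ jj, hcne, himp⟩

end CGAux4
section CGAux5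

open Finset
open scoped Classical

variable {n : ℕ} {C : Type} [DecidableEq C]
variable (E : Fin n → Fin n → Prop) [DecidableRel E] (A : Fin n → Finset C)

lemma hdP_val
    (hin : ∀ i j k, SameSCC E i j → SameSCC E i k → E j i → E k i → j = k)
    {s : Fin n → C} {v q : Fin n} (hq : E q v) (hsq : SameSCC E v q) :
    hdP E A s v ↔ (s q ≠ s v ∧ (s q ∉ A v ∨ eC E s v (s q) < eC E s v (s v))) := by
  constructor
  · rintro ⟨q', ⟨h1, h2⟩, h3, h4⟩
    have : q' = q := hin v q' q h2 hsq h1 hq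
    subst this
    exact ⟨h3, h4⟩
  · rintro ⟨h3, h4⟩
    exact ⟨q, ⟨hq, hsq⟩, h3, h4⟩

lemma dgt_low_of {s s' : Fin n → C} {L : ℕ}
    (h : ∀ m, s' m ≠ s m → lv E m = L) :
    ∀ ℓ, ℓ < L → dgt E A s' ℓ = dgt E A s ℓ := by
  intro ℓ hℓ
  have hnode : ∀ v ∈ levset E ℓ, payoff E s' v = payoff E s v ∧
      xC E s' v = xC E s v ∧ (hdP E A s' v ↔ hdP E A s v) := by
    intro v hv
    have hlvv : lv E v = ℓ := (mem_levset E).mp hv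
    have hv' : s' v = s v := by
      by_contra hh
      have := h v hh
      omega
    apply node_congr E A hv'
    intro m hm
    by_contra hh
    have h1 := h m hh
    have h2 := lv_in_le E hm
    omega
  have hT : TQ E s' ℓ = TQ E s ℓ :=
    Finset.sum_congr rfl (fun v hv => (hnode v hv).1)
  have hE : EQ E s' ℓ = EQ E s ℓ :=
    Finset.sum_congr rfl (fun v hv => (hnode v hv).2.1)
  have hR : RQ E A s' ℓ = RQ E A s ℓ :=
    Finset.sum_congr rfl (fun v hv => by simp only [(hnode v hv).2.2])
  unfold dgt
  rw [hT, hE, hR]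

/-- The "phase" lemma. -/
lemma phase
    (hloop : ∀ i, ¬ E i i)
    (hin : ∀ i j k, SameSCC E i j → SameSCC E i k → E j i → E k i → j = k)
    (hout : ∀ i j k, SameSCC E i j → SameSCC E i k → E i j → E i k → j = k)
    (d : ℕ) :
    ∀ (s : Fin n → C) (i q j : Fin n), Valid A s →
    E q i → SameSCC E i q → E i j → SameSCC E i j →
    s q ≠ s i → s j = s i → s q ∈ A i →
    eC E s i (s q) = eC E s i (s i) →
    (∀ t, 1 ≤ t → t < d → s ((fS E)^[t] i) = s i) →
    s ((fS E)^[d] i) ≠ s i →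
    ∃ s₂, Valid A s₂ ∧
      Relation.ReflTransGen (fun u v => Valid A v ∧ ProfDev (payoff E) u v) s s₂ ∧
      (∀ ℓ, ℓ < lv E i → dgt E A s₂ ℓ = dgt E A s ℓ) ∧
      dgt E A s (lv E i) < dgt E A s₂ (lv E i) := by
  induction d using Nat.strong_induction_on with
  | _ d IH =>
  intro s i q j hval hEqi hSiq hEij hSij hq_ne hj_eq hqA heeq hchain hend
  have hqi : q ≠ i := fun h => hloop i (h ▸ hEqi)
  have hij : i ≠ j := fun h => hloop i (h ▸ hEij)
  have hqj : q ≠ j := by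
    intro h
    rw [h] at hq_ne
    exact hq_ne hj_eq
  set α := s q with hαdef
  set s₁ : Fin n → C := Function.update s i α with hs₁def
  have hfij : fS E i = j := fS_eq E hout hEij hSij
  have hlvj : lv E j = lv E i := (lv_congr E hSij).symm
  have hs₁i : s₁ i = α := Function.update_self i α s
  have hs₁v : ∀ v, v ≠ i → s₁ v = s v := fun v hv => Function.update_of_ne hv α s
  -- basic payoff values at i
  have hbCi : bC E s i = 0 := by
    rw [bC_eq E hin hEqi hSiq, if_neg hq_ne]
  have hbC₁i : bC E s₁ i = 1 := by
    rw [bC_eq E hin hEqi hSiq, hs₁v q hqi, hs₁i, if_pos rfl]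
  have hxC₁i : xC E s₁ i = xC E s i := by
    have h2 : eC E s₁ i α = eC E s i α := by
      apply eC_congr
      intro m hm hns
      exact hs₁v m (fun h => hns (h ▸ sccRefl E i))
    show eC E s₁ i (s₁ i) = eC E s i (s i)
    rw [hs₁i, h2, ← heeq]
  have hpay₁i : payoff E s₁ i = payoff E s i + 1 := by
    rw [payoff_split, payoff_split, hbCi, hbC₁i, hxC₁i]
    omega
  have himp_i : payoff E s i < payoff E s₁ i := by omega
  have hval₁ : Valid A s₁ := upd_valid A hval hqA
  have hstep1 : Valid A s₁ ∧ ProfDev (payoff E) s s₁ :=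
    ⟨hval₁, upd_profdev E hq_ne himp_i⟩
  -- payoff change at j
  have hECj : ∀ c, eC E s₁ j c = eC E s j c := by
    intro c
    apply eC_congr
    intro m hm hns
    exact hs₁v m (fun h => hns (h ▸ sccSymm E hSij))
  have hxC₁j : xC E s₁ j = xC E s j := by
    apply xC_congr E (hs₁v j (Ne.symm hij))
    intro m hm hns
    exact hs₁v m (fun h => hns (h ▸ sccSymm E hSij))
  have hbCj : bC E s j = 1 := by
    rw [bC_eq E hin hEij (sccSymm E hSij), hj_eq, if_pos rfl]
  have hbC₁j : bC E s₁ j = 0 := by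
    rw [bC_eq E hin hEij (sccSymm E hSij), hs₁v j (Ne.symm hij), hs₁i, hj_eq, if_neg hq_ne]
  have hpay₁j : payoff E s₁ j + 1 = payoff E s j := by
    rw [payoff_split, payoff_split, hbCj, hbC₁j, hxC₁j]
    omega
  -- other nodes at the same level are untouched
  have hothers : ∀ v, lv E v = lv E i → v ≠ j → ∀ m, E m v → s₁ m = s m := by
    intro v hv hvj m hm
    rcases eq_or_ne m i with rfl | hmi
    · by_cases hsm : SameSCC E m v
      · exfalso
        exact hvj (by rw [← fS_eq E hout hm hsm, hfij])
      · exfalso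
        have := lv_in_lt E hm (fun hh => hsm (sccSymm E hh))
        omega
    · exact hs₁v m hmi
  have hnode1 : ∀ v, lv E v = lv E i → v ≠ i → v ≠ j →
      payoff E s₁ v = payoff E s v ∧ xC E s₁ v = xC E s v ∧
        (hdP E A s₁ v ↔ hdP E A s v) :=
    fun v hv hvi hvj => node_congr E A (hs₁v v hvi) (hothers v hv hvj)
  have hilev : i ∈ levset E (lv E i) := (mem_levset E).mpr rfl
  have hjlev : j ∈ levset E (lv E i) := (mem_levset E).mpr hlvj
  have hTQ : TQ E s₁ (lv E i) = TQ E s (lv E i) := by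
    have h := sum_exc2 (g := payoff E s) (g' := payoff E s₁) hilev hjlev hij
      (fun v hv hvi hvj => (hnode1 v ((mem_levset E).mp hv) hvi hvj).1)
    unfold TQ
    omega
  have hEQ : EQ E s₁ (lv E i) = EQ E s (lv E i) := by
    apply Finset.sum_congr rfl
    intro v hv
    rcases eq_or_ne v i with rfl | hvi
    · exact hxC₁i
    · rcases eq_or_ne v j with rfl | hvj
      · exact hxC₁j
      · exact (hnode1 v ((mem_levset E).mp hv) hvi hvj).2.1
  have hhdi : ¬ hdP E A s i := by
    rw [hdP_val E A hin hEqi hSiq]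
    rintro ⟨-, h2 | h2⟩
    · exact h2 hqA
    · rw [heeq] at h2
      omega
  have hhd₁i : ¬ hdP E A s₁ i := by
    rw [hdP_val E A hin hEqi hSiq]
    rintro ⟨h1, -⟩
    rw [hs₁v q hqi, hs₁i] at h1
    exact h1 rfl
  have hhdj : ¬ hdP E A s j := by
    rw [hdP_val E A hin hEij (sccSymm E hSij)]
    rintro ⟨h1, -⟩
    exact h1 hj_eq.symm
  have hRQ : RQ E A s₁ (lv E i) = RQ E A s (lv E i)
      + (if hdP E A s₁ j then 1 else 0) := by
    have h := sum_exc2 (g := fun v => if hdP E A s v then 1 else 0)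
      (g' := fun v => if hdP E A s₁ v then 1 else 0) hilev hjlev hij
      (fun v hv hvi hvj => by
        simp only [(hnode1 v ((mem_levset E).mp hv) hvi hvj).2.2])
    simp only [if_neg hhdi, if_neg hhdj, if_neg hhd₁i] at h
    unfold RQ
    omega
  have hlow₁ : ∀ ℓ, ℓ < lv E i → dgt E A s₁ ℓ = dgt E A s ℓ := by
    apply dgt_low_of
    intro m hm
    rcases eq_or_ne m i with rfl | hmi
    · rfl
    · exact absurd (hs₁v m hmi) hm
  by_cases hhd₁j : hdP E A s₁ j
  · -- R-increase: one step
    have hpath1 : Relation.ReflTransGen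
        (fun u v => Valid A v ∧ ProfDev (payoff E) u v) s s₁ :=
      Relation.ReflTransGen.single
        (show (fun u v => Valid A v ∧ ProfDev (payoff E) u v) s s₁ from hstep1)
    refine ⟨s₁, hval₁, hpath1, hlow₁, ?_⟩
    apply dgt_lt_of_RQ E A (le_of_eq hEQ.symm) (le_of_eq hTQ.symm)
    rw [hRQ, if_pos hhd₁j]
    omega
  · have hhd₁j0 := hhd₁j
    rw [hdP_val E A hin (q := i) hEij (sccSymm E hSij)] at hhd₁j
    push_neg at hhd₁j
    have hs₁ij : s₁ i ≠ s₁ j := by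
      rw [hs₁i, hs₁v j (Ne.symm hij), hj_eq]
      exact hq_ne
    obtain ⟨hαAj, hge⟩ := hhd₁j hs₁ij
    rw [hs₁i] at hαAj
    rw [hs₁i, hs₁v j (Ne.symm hij), hECj, hECj] at hge
    -- hαAj : α ∈ A j, hge : ¬ eC s j α < eC s j (s j)
    set w := fS E j with hwdef
    have hexw : ∃ z, E j z ∧ SameSCC E j z :=
      succ_exists E (sccSymm E hSij) (fun h => hij h.symm)
    have hw : E j w ∧ SameSCC E j w := by
      rw [hwdef]; exact fS_spec E hexw
    have hwj : w ≠ j := fun h => hloop j (h ▸ hw.1)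
    have hwi : w ≠ i := by
      intro h
      have hEji : E j i := h ▸ hw.1
      have : q = j := hin i q j hSiq hSij hEqi hEji
      exact hqj this
    have hlvw : lv E w = lv E i := by
      rw [← hlvj]
      exact (lv_congr E hw.2).symm
    have hwlev : w ∈ levset E (lv E i) := (mem_levset E).mpr hlvw
    -- second-move setup
    set s₂ : Fin n → C := Function.update s₁ j α with hs₂def
    have hs₂j : s₂ j = α := Function.update_self j α s₁
    have hs₂v : ∀ v, v ≠ j → s₂ v = s₁ v := fun v hv => Function.update_of_ne hv α s₁
    have hs₂i : s₂ i = α := by rw [hs₂v i hij, hs₁i]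
    have hs₂m : ∀ m, m ≠ i → m ≠ j → s₂ m = s m := by
      intro m h1 h2
      rw [hs₂v m h2, hs₁v m h1]
    have hα_ne_sj : α ≠ s₁ j := by
      rw [hs₁v j (Ne.symm hij), hj_eq]
      exact hq_ne
    have hECj₂ : ∀ c, eC E s₂ j c = eC E s j c := by
      intro c
      apply eC_congr
      intro m hm hns
      have hmi : m ≠ i := fun h => hns (h ▸ sccSymm E hSij)
      have hmj : m ≠ j := fun h => hns (h ▸ sccRefl E j)
      exact hs₂m m hmi hmj
    have hpay₂j : payoff E s₂ j = 1 + eC E s j α := by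
      rw [payoff_split]
      have hb : bC E s₂ j = 1 := by
        rw [bC_eq E hin hEij (sccSymm E hSij), hs₂i, hs₂j, if_pos rfl]
      have hx : xC E s₂ j = eC E s j α := by
        show eC E s₂ j (s₂ j) = _
        rw [hs₂j, hECj₂]
      rw [hb, hx]
    have hpay₁j' : payoff E s₁ j = eC E s j (s j) := by
      rw [payoff_split, hbC₁j, hxC₁j]
      simp [xC]
    have himpj : payoff E s₁ j < payoff E s₂ j := by
      rw [hpay₂j, hpay₁j']
      omega
    have hstep2 : Valid A s₂ ∧ ProfDev (payoff E) s₁ s₂ :=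
      ⟨upd_valid A hval₁ hαAj, upd_profdev E hα_ne_sj himpj⟩
    have hstep1' : (fun u v => Valid A v ∧ ProfDev (payoff E) u v) s s₁ := hstep1
    have hstep2' : (fun u v => Valid A v ∧ ProfDev (payoff E) u v) s₁ s₂ := hstep2
    have hpath2 : Relation.ReflTransGen
        (fun u v => Valid A v ∧ ProfDev (payoff E) u v) s s₂ := by
      apply Relation.ReflTransGen.tail (b := s₁)
      · exact Relation.ReflTransGen.single hstep1'
      · exact hstep2'
    have hlow₂ : ∀ ℓ, ℓ < lv E i → dgt E A s₂ ℓ = dgt E A s ℓ := by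
      apply dgt_low_of
      intro m hm
      rcases eq_or_ne m i with rfl | hmi
      · rfl
      · rcases eq_or_ne m j with rfl | hmj
        · exact hlvj
        · exact absurd (hs₂m m hmi hmj) hm
    have hxC₂i : xC E s₂ i = xC E s i := by
      have h2 : eC E s₂ i α = eC E s i α := by
        apply eC_congr
        intro m hm hns
        have hmi : m ≠ i := fun h => hns (h ▸ sccRefl E i)
        have hmj : m ≠ j := fun h => hns (h ▸ hSij)
        exact hs₂m m hmi hmj
      show eC E s₂ i (s₂ i) = eC E s i (s i)
      rw [hs₂i, h2, ← heeq]
    have hxC₂j : xC E s₂ j = eC E s j α := by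
      show eC E s₂ j (s₂ j) = _
      rw [hs₂j, hECj₂]
    have hxoth₂ : ∀ v, lv E v = lv E i → v ≠ i → v ≠ j → xC E s₂ v = xC E s v := by
      intro v hv hvi hvj
      apply xC_congr E (hs₂m v hvi hvj)
      intro m hm hns
      have h1 := lv_in_lt E hm hns
      have hmi : m ≠ i := by intro h; rw [h] at h1; omega
      have hmj : m ≠ j := by intro h; rw [h] at h1; omega
      exact hs₂m m hmi hmj
    by_cases hlt : eC E s j (s j) < eC E s j α
    · -- E-increase with two steps
      refine ⟨s₂, hstep2.1, hpath2, hlow₂, ?_⟩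
      apply dgt_lt_of_EQ
      have h := sum_exc2 (g := xC E s) (g' := xC E s₂) hilev hjlev hij
        (fun v hv hvi hvj => hxoth₂ v ((mem_levset E).mp hv) hvi hvj)
      have hxj : xC E s j = eC E s j (s j) := rfl
      unfold EQ
      omega
    · have heqj : eC E s j α = eC E s j (s j) :=
        le_antisymm (not_lt.mp hlt) hge
      by_cases hsw : s w = s j
      · -- recursive case
        have hd3 : 3 ≤ d := by
          by_contra hcon
          rcases (by omega : d = 0 ∨ d = 1 ∨ d = 2) with rfl | rfl | rfl
          · simp at hend
          · rw [Function.iterate_one, hfij] at hend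
            exact hend hj_eq
          · have h2 : (fS E)^[2] i = w := by
              show (fS E)^[1+1] i = w
              rw [Function.iterate_succ_apply', Function.iterate_one, hfij, hwdef]
            rw [h2] at hend
            exact hend (by rw [hsw, hj_eq])
        have hnonper : ∀ t', 1 ≤ t' → t' ≤ d → (fS E)^[t'] i ≠ i := by
          intro t' h1 h2 heqq
          have hiter : (fS E)^[d] i = (fS E)^[d - t'] i := by
            have hh := Function.iterate_add_apply (fS E) (d - t') t' i
            rw [show d - t' + t' = d by omega] at hh
            rw [hh, heqq]
          rcases Nat.eq_zero_or_pos (d - t') with h0 | hpos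
          · rw [h0] at hiter
            simp only [Function.iterate_zero, id_eq] at hiter
            exact hend (by rw [hiter])
          · have hlt' : d - t' < d := by omega
            exact hend (by rw [hiter, hchain (d - t') hpos hlt'])
        have hchain' : ∀ t, 1 ≤ t → t < d - 1 → s₁ ((fS E)^[t] j) = s₁ j := by
          intro t h1 h2
          have hit : (fS E)^[t] j = (fS E)^[t+1] i := by
            rw [← hfij]
            exact (Function.iterate_succ_apply (fS E) t i).symm
          have hne_i : (fS E)^[t+1] i ≠ i := hnonper (t+1) (by omega) (by omega)
          rw [hit, hs₁v _ hne_i, hs₁v j (Ne.symm hij), hchain (t+1) (by omega) (by omega), hj_eq]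
        have hend' : s₁ ((fS E)^[d-1] j) ≠ s₁ j := by
          have hit : (fS E)^[d-1] j = (fS E)^[d] i := by
            rw [← hfij]
            have hh := Function.iterate_succ_apply (fS E) (d-1) i
            rw [show Nat.succ (d - 1) = d by omega] at hh
            exact hh.symm
          rw [hit, hs₁v _ (hnonper d (by omega) le_rfl), hs₁v j (Ne.symm hij), hj_eq]
          exact hend
        have hs₁w : s₁ w = s₁ j := by
          rw [hs₁v w hwi, hs₁v j (Ne.symm hij), hsw]
        have hαAj' : s₁ i ∈ A j := by rw [hs₁i]; exact hαAj
        have heeq' : eC E s₁ j (s₁ i) = eC E s₁ j (s₁ j) := by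
          rw [hs₁i, hs₁v j (Ne.symm hij), hECj, hECj, heqj]
        obtain ⟨s₃, hval₃, hpath₃, hlow₃, hup₃⟩ :=
          IH (d-1) (by omega) s₁ j i w hval₁ hEij (sccSymm E hSij) hw.1 hw.2
            hs₁ij hs₁w hαAj' heeq' hchain' hend'
        have hdgt₁ : dgt E A s₁ (lv E i) = dgt E A s (lv E i) := by
          unfold dgt
          rw [hTQ, hEQ, hRQ, if_neg hhd₁j0]
          omega
        have hpath13 : Relation.ReflTransGen
            (fun u v => Valid A v ∧ ProfDev (payoff E) u v) s s₃ := by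
          apply Relation.ReflTransGen.trans (b := s₁)
          · exact Relation.ReflTransGen.single
              (show (fun u v => Valid A v ∧ ProfDev (payoff E) u v) s s₁ from hstep1)
          · exact hpath₃
        refine ⟨s₃, hval₃, hpath13, ?_, ?_⟩
        · intro ℓ hℓ
          rw [hlow₃ ℓ (by rw [hlvj]; exact hℓ), hlow₁ ℓ hℓ]
        · rw [← hdgt₁]
          rw [hlvj] at hup₃
          exact hup₃
      · -- T-increase with two steps
        have hpay₂i : payoff E s₂ i = payoff E s i + 1 := by
          rw [payoff_split, payoff_split, hbCi, hxC₂i]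
          have hb : bC E s₂ i = 1 := by
            rw [bC_eq E hin hEqi hSiq, hs₂m q hqi hqj, hs₂i, if_pos rfl]
          rw [hb]
          omega
        have hpay₂j' : payoff E s₂ j = payoff E s j := by
          rw [hpay₂j, payoff_split, hbCj, heqj]
          rfl
        have hpay₂w : payoff E s w ≤ payoff E s₂ w := by
          rw [payoff_split, payoff_split]
          have hbw : bC E s w = 0 := by
            rw [bC_eq E hin hw.1 (sccSymm E hw.2), if_neg (fun h => hsw h.symm)]
          have hxw : xC E s₂ w = xC E s w := hxoth₂ w hlvw hwi hwj
          rw [hbw, hxw]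
          omega
        have hoth₂ : ∀ v, lv E v = lv E i → v ≠ i → v ≠ j → v ≠ w →
            payoff E s₂ v = payoff E s v := by
          intro v hv hvi hvj hvw
          apply payoff_congr E (hs₂m v hvi hvj)
          intro m hm
          rcases eq_or_ne m i with rfl | hmi
          · by_cases hsm : SameSCC E m v
            · exact absurd (by rw [← fS_eq E hout hm hsm, hfij]) hvj
            · exfalso
              have := lv_in_lt E hm (fun hh => hsm (sccSymm E hh))
              omega
          · rcases eq_or_ne m j with rfl | hmj
            · by_cases hsm : SameSCC E m v
              · exact absurd (by rw [← fS_eq E hout hm hsm, ← hwdef]) hvw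
              · exfalso
                have := lv_in_lt E hm (fun hh => hsm (sccSymm E hh))
                omega
            · exact hs₂m m hmi hmj
        refine ⟨s₂, hstep2.1, hpath2, hlow₂, ?_⟩
        apply dgt_lt_of_TQ
        · -- EQ ≤
          apply le_of_eq
          apply Finset.sum_congr rfl
          intro v hv
          rcases eq_or_ne v i with rfl | hvi
          · exact hxC₂i.symm
          · rcases eq_or_ne v j with rfl | hvj
            · rw [hxC₂j, heqj]
              rfl
            · exact (hxoth₂ v ((mem_levset E).mp hv) hvi hvj).symm
        · -- TQ <
          have h := sum_exc3 (g := payoff E s) (g' := payoff E s₂)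
            hilev hjlev hwlev hij (fun h => hwi h.symm) (fun h => hwj h.symm)
            (fun v hv h1 h2 h3 => hoth₂ v ((mem_levset E).mp hv) h1 h2 h3)
          unfold TQ
          omega

end CGAux5
section CGAux6

open Finset
open scoped Classical

variable {n : ℕ} {C : Type} [DecidableEq C]
variable (E : Fin n → Fin n → Prop) [DecidableRel E] (A : Fin n → Finset C)

lemma single_move
    (hloop : ∀ i, ¬ E i i)
    (hin : ∀ i j k, SameSCC E i j → SameSCC E i k → E j i → E k i → j = k)
    (hout : ∀ i j k, SameSCC E i j → SameSCC E i k → E i j → E i k → j = k)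
    {s : Fin n → C} {i : Fin n} {c : C}
    (hval : Valid A s) (hc : c ∈ A i) (hne : c ≠ s i)
    (himp : payoff E s i < payoff E (Function.update s i c) i) :
    ∃ s₂, Valid A s₂ ∧
      Relation.ReflTransGen (fun u v => Valid A v ∧ ProfDev (payoff E) u v) s s₂ ∧
      muM E A s < muM E A s₂ := by
  set s₁ : Fin n → C := Function.update s i c with hs₁def
  have hs₁i : s₁ i = c := Function.update_self i c s
  have hs₁v : ∀ v, v ≠ i → s₁ v = s v := fun v hv => Function.update_of_ne hv c s
  have hval₁ : Valid A s₁ := upd_valid A hval hc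
  have hstep1 : Valid A s₁ ∧ ProfDev (payoff E) s s₁ :=
    ⟨hval₁, upd_profdev E hne himp⟩
  have hpath1 : Relation.ReflTransGen
      (fun u v => Valid A v ∧ ProfDev (payoff E) u v) s s₁ :=
    Relation.ReflTransGen.single
      (show (fun u v => Valid A v ∧ ProfDev (payoff E) u v) s s₁ from hstep1)
  have hlow₁ : ∀ ℓ, ℓ < lv E i → dgt E A s₁ ℓ = dgt E A s ℓ := by
    apply dgt_low_of
    intro m hm
    rcases eq_or_ne m i with rfl | hmi
    · rfl
    · exact absurd (hs₁v m hmi) hm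
  have hilev : i ∈ levset E (lv E i) := (mem_levset E).mpr rfl
  have hxC₁i : xC E s₁ i = eC E s i c := by
    show eC E s₁ i (s₁ i) = _
    rw [hs₁i]
    apply eC_congr
    intro m hm hns
    exact hs₁v m (fun h => hns (h ▸ sccRefl E i))
  have hxother : ∀ v, lv E v = lv E i → v ≠ i → xC E s₁ v = xC E s v := by
    intro v hv hvi
    apply xC_congr E (hs₁v v hvi)
    intro m hm hns
    have h1 := lv_in_lt E hm hns
    exact hs₁v m (by intro h; rw [h] at h1; omega)
  by_cases hx : xC E s i < xC E s₁ i
  · -- E-increase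
    refine ⟨s₁, hval₁, hpath1, mu_lt_of_dgt E A (lv_le_n E i) hlow₁ ?_⟩
    apply dgt_lt_of_EQ
    have h := sum_exc1 (g := xC E s) (g' := xC E s₁) hilev
      (fun v hv hvi => hxother v ((mem_levset E).mp hv) hvi)
    unfold EQ
    omega
  · have hb1 := bC_le_one E hin s₁ i
    have hsp1 := payoff_split E s₁ i
    have hsp0 := payoff_split E s i
    have hxeq : xC E s₁ i = xC E s i := by omega
    have hbv : bC E s₁ i = 1 ∧ bC E s i = 0 := by omega
    have hcard : 0 < bC E s₁ i := by omega
    rw [bC, Finset.card_pos] at hcard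
    obtain ⟨q, hqmem⟩ := hcard
    simp only [Finset.mem_filter, Finset.mem_univ, true_and] at hqmem
    obtain ⟨hEqi, hSiq, hsq⟩ := hqmem
    have hqi : q ≠ i := fun h => hloop i (h ▸ hEqi)
    have hsqc : s q = c := by
      rw [← hs₁v q hqi, hsq, hs₁i]
    have hq_ne : s q ≠ s i := by rw [hsqc]; exact hne
    have hexj : ∃ w, E i w ∧ SameSCC E i w :=
      succ_exists E hSiq (Ne.symm hqi)
    set j := fS E i with hjdef
    have hj : E i j ∧ SameSCC E i j := by rw [hjdef]; exact fS_spec E hexj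
    have hij : i ≠ j := fun h => hloop i (h ▸ hj.1)
    have hlvj : lv E j = lv E i := (lv_congr E hj.2).symm
    have hjlev : j ∈ levset E (lv E i) := (mem_levset E).mpr hlvj
    have heeq : eC E s i (s q) = eC E s i (s i) := by
      rw [hsqc]
      rw [← hxC₁i, hxeq]
      rfl
    by_cases hjs : s j = s i
    · -- stuck move: run the phase
      obtain ⟨t₀, ht₀⟩ := orb E hout hSiq.1 hSiq.2
      have ht₀1 : 1 ≤ t₀ := by
        rcases Nat.eq_zero_or_pos t₀ with h0 | h1
        · rw [h0] at ht₀
          simp only [Function.iterate_zero, id_eq] at ht₀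
          exact absurd ht₀.symm hqi
        · exact h1
      have hPex : ∃ t, 1 ≤ t ∧ s ((fS E)^[t] i) ≠ s i :=
        ⟨t₀, ht₀1, by rw [ht₀]; exact hq_ne⟩
      have hdspec := Nat.find_spec hPex
      have hchain : ∀ t, 1 ≤ t → t < Nat.find hPex → s ((fS E)^[t] i) = s i := by
        intro t h1 h2
        have h3 := Nat.find_min hPex h2
        by_contra hcc
        exact h3 ⟨h1, hcc⟩
      obtain ⟨s₂, hval₂, hpath₂, hlow₂, hup₂⟩ :=
        phase E A hloop hin hout (Nat.find hPex) s i q j hval hEqi hSiq hj.1 hj.2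
          hq_ne hjs (by rw [hsqc]; exact hc) heeq hchain hdspec.2
      exact ⟨s₂, hval₂, hpath₂, mu_lt_of_dgt E A (lv_le_n E i) hlow₂ hup₂⟩
    · -- T-increase
      have hfij : fS E i = j := hjdef.symm
      have hothers : ∀ v, lv E v = lv E i → v ≠ j → ∀ m, E m v → s₁ m = s m := by
        intro v hv hvj m hm
        rcases eq_or_ne m i with rfl | hmi
        · by_cases hsm : SameSCC E m v
          · exact absurd (by rw [← fS_eq E hout hm hsm, hfij]) hvj
          · exfalso
            have := lv_in_lt E hm (fun hh => hsm (sccSymm E hh))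
            omega
        · exact hs₁v m hmi
      have hpay₁i : payoff E s₁ i = payoff E s i + 1 := by omega
      have hbCj : bC E s j = 0 := by
        rw [bC_eq E hin hj.1 (sccSymm E hj.2), if_neg (fun h => hjs h.symm)]
      have hxC₁j : xC E s₁ j = xC E s j := by
        apply xC_congr E (hs₁v j (Ne.symm hij))
        intro m hm hns
        exact hs₁v m (fun h => hns (h ▸ sccSymm E hj.2))
      have hpayj : payoff E s j ≤ payoff E s₁ j := by
        rw [payoff_split, payoff_split, hbCj, hxC₁j]
        omega
      refine ⟨s₁, hval₁, hpath1, mu_lt_of_dgt E A (lv_le_n E i) hlow₁ ?_⟩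
      apply dgt_lt_of_TQ
      · apply le_of_eq
        apply (Finset.sum_congr rfl ?_).symm
        intro v hv
        rcases eq_or_ne v i with rfl | hvi
        · exact hxeq
        · exact hxother v ((mem_levset E).mp hv) hvi
      · have h := sum_exc2 (g := payoff E s) (g' := payoff E s₁) hilev hjlev hij
          (fun v hv hvi hvj =>
            payoff_congr E (hs₁v v hvi)
              (hothers v ((mem_levset E).mp hv) hvj))
        unfold TQ
        omega

lemma grand_move
    (hin : ∀ i j k, SameSCC E i j → SameSCC E i k → E j i → E k i → j = k)
    {s s₂ : Fin n → C} {i₀ : Fin n}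
    (hdev : ProfDev (payoff E) s s₂)
    (hdiff : ∀ v, s₂ v ≠ s v ↔ SameSCC E i₀ v) :
    muM E A s < muM E A s₂ := by
  have hmv : ∀ m, s₂ m ≠ s m → lv E m = lv E i₀ :=
    fun m hm => (lv_congr E ((hdiff m).mp hm)).symm
  have hlow := dgt_low_of E A hmv
  have hsame_m : ∀ v, ¬ SameSCC E i₀ v → lv E v = lv E i₀ →
      (∀ m, E m v → s₂ m = s m) := by
    intro v hnv hlvv m hm
    by_contra hmm
    have hsm : SameSCC E i₀ m := (hdiff m).mp hmm
    by_cases hvm : SameSCC E v m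
    · exact hnv (sccTrans E hsm (sccSymm E hvm))
    · have h1 := lv_in_lt E hm hvm
      have h2 := hmv m hmm
      omega
  have hnode : ∀ v, ¬ SameSCC E i₀ v → lv E v = lv E i₀ →
      payoff E s₂ v = payoff E s v ∧ xC E s₂ v = xC E s v := by
    intro v hnv hlvv
    have hv' : s₂ v = s v := by
      by_contra hh
      exact hnv ((hdiff v).mp hh)
    exact ⟨payoff_congr E hv' (hsame_m v hnv hlvv),
      xC_congr E hv' (fun m hm _ => hsame_m v hnv hlvv m hm)⟩
  have hup : dgt E A s (lv E i₀) < dgt E A s₂ (lv E i₀) := by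
    apply dgt_lt_of_TQ
    · -- EQ ≤
      apply Finset.sum_le_sum
      intro v hv
      by_cases hsv : SameSCC E i₀ v
      · have hp := hdev.2 v (fun h => ((hdiff v).mpr hsv) h.symm)
        have h1 := payoff_split E s v
        have h2 := payoff_split E s₂ v
        have h3 := bC_le_one E hin s₂ v
        omega
      · exact le_of_eq (hnode v hsv ((mem_levset E).mp hv)).2.symm
    · -- TQ <
      apply Finset.sum_lt_sum
      · intro v hv
        by_cases hsv : SameSCC E i₀ v
        · exact le_of_lt (hdev.2 v (fun h => ((hdiff v).mpr hsv) h.symm))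
        · exact le_of_eq (hnode v hsv ((mem_levset E).mp hv)).1.symm
      · refine ⟨i₀, (mem_levset E).mpr rfl, ?_⟩
        exact hdev.2 i₀ (fun h => ((hdiff i₀).mpr (sccRefl E i₀)) h.symm)
  exact mu_lt_of_dgt E A (lv_le_n E i₀) hlow hup

lemma step_ex
    (hloop : ∀ i, ¬ E i i)
    (hin : ∀ i j k, SameSCC E i j → SameSCC E i k → E j i → E k i → j = k)
    (hout : ∀ i j k, SameSCC E i j → SameSCC E i k → E i j → E i k → j = k)
    {s : Fin n → C} (hval : Valid A s) (hnse : ¬ StrongEq A (payoff E) s) :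
    ∃ s₂, Valid A s₂ ∧
      Relation.ReflTransGen (fun u v => Valid A v ∧ ProfDev (payoff E) u v) s s₂ ∧
      muM E A s < muM E A s₂ := by
  unfold StrongEq at hnse
  push_neg at hnse
  obtain ⟨s₁, hval₁, hdev⟩ := hnse
  rcases red E A hloop hin hout hval hval₁ hdev with
    ⟨i, c, hc, hne, himp⟩ | ⟨i₀, s₂, hval₂, hdev₂, hdiff⟩
  · exact single_move E A hloop hin hout hval hc hne himp
  · refine ⟨s₂, hval₂, ?_, grand_move E A hin hdev₂ hdiff⟩
    exact Relation.ReflTransGen.single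
      (show (fun u v => Valid A v ∧ ProfDev (payoff E) u v) s s₂ from
        ⟨hval₂, hdev₂⟩)

lemma master
    (hloop : ∀ i, ¬ E i i)
    (hin : ∀ i j k, SameSCC E i j → SameSCC E i k → E j i → E k i → j = k)
    (hout : ∀ i j k, SameSCC E i j → SameSCC E i k → E i j → E i k → j = k) :
    ∀ (g : ℕ) (s : Fin n → C), Valid A s → (Dd n) ^ (n + 1) < muM E A s + g →
    ∃ t, Relation.ReflTransGen
        (fun u v => Valid A v ∧ ProfDev (payoff E) u v) s t ∧
      StrongEq A (payoff E) t := by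
  intro g
  induction g with
  | zero =>
    intro s hv hlt
    have := muM_lt_bound E A s
    omega
  | succ g ih =>
    intro s hv hlt
    by_cases hse : StrongEq A (payoff E) s
    · exact ⟨s, Relation.ReflTransGen.refl, hse⟩
    · obtain ⟨s₂, hval₂, hpath, hmu⟩ := step_ex E A hloop hin hout hv hse
      obtain ⟨t, hpt, hst⟩ := ih s₂ hval₂ (by omega)
      exact ⟨t, hpath.trans hpt, hst⟩

lemma valid_of_path {s t : Fin n → C}
    (h : Relation.ReflTransGen
      (fun u v => Valid A v ∧ ProfDev (payoff E) u v) s t)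
    (hv : Valid A s) : Valid A t := by
  induction h with
  | refl => exact hv
  | tail _ hstep _ => exact hstep.1

end CGAux6


/-- Every coordination game on a directed graph in which every strongly
connected component is a single node or a simple directed cycle (equivalently,
within each SCC, every node has at most one in-neighbour and at most one
out-neighbour belonging to that SCC) is coalitionally weakly acyclic — from
every valid colouring there is a finite coalitional improvement path ending in
a strong equilibrium — and hence possesses a strong equilibrium. -/
theorem scc_simple_cycles_c_weakly_acyclic {n : ℕ} {C : Type} [DecidableEq C]
    (E : Fin n → Fin n → Prop) [DecidableRel E]
    (hloop : ∀ i, ¬ E i i)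
    (hin : ∀ i j k, SameSCC E i j → SameSCC E i k → E j i → E k i → j = k)
    (hout : ∀ i j k, SameSCC E i j → SameSCC E i k → E i j → E i k → j = k)
    (A : Fin n → Finset C) (hA : ∀ i, (A i).Nonempty) :
    (∀ s, Valid A s →
      ∃ t, Relation.ReflTransGen
          (fun u v => Valid A v ∧ ProfDev (payoff E) u v) s t ∧
        StrongEq A (payoff E) t) ∧
    ∃ s, Valid A s ∧ StrongEq A (payoff E) s := by
  have main : ∀ s, Valid A s →
      ∃ t, Relation.ReflTransGen
          (fun u v => Valid A v ∧ ProfDev (payoff E) u v) s t ∧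
        StrongEq A (payoff E) t := by
    intro s hv
    exact master E A hloop hin hout ((Dd n) ^ (n + 1) + 1) s hv (by omega)
  refine ⟨main, ?_⟩
  set s₀ : Fin n → C := fun i => (hA i).choose with hs₀
  have hv₀ : Valid A s₀ := fun i => (hA i).choose_spec
  obtain ⟨t, hpt, hst⟩ := main s₀ hv₀
  exact ⟨t, valid_of_path E A hpt hv₀, hst⟩
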